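/- arXiv:2602.14748 — 4 statements merged into one kernel-verified Lean document; each statement's English description precedes it below -/
import Mathlib

section
/- Let L be a language over Σ and p ∈ ℕ a threshold. Let u be a word with set of p-frequent letters T = T_p(u), and let u' be a word having u as a factor, with set of p-frequent letters T' = T_p(u'). Then T ⊆ T', and if u ∈ Cond(T) then u' ∈ Cond(T'). -/
variable {α : Type*}

/-- `u` is a factor of `v`: `v = s ++ u ++ t` for some words `s, t`. -/
def IsFactor (u v : List α) : Prop := ∃ s t : List α, v = s ++ u ++ t

/-- A letter `e` is neutral for the language `L`. -/
def Neutral (L : Set (List α)) (e : α) : Prop :=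
  ∀ s t : List α, s ++ t ∈ L ↔ s ++ [e] ++ t ∈ L

/-- A language is extensible if it contains all extensions of its members. -/
def Extensible (L : Set (List α)) : Prop :=
  ∀ u v : List α, u ∈ L → IsFactor u v → v ∈ L

open Classical in
/-- `u_{-S}`: delete from `u` all occurrences of letters in `S`. -/
noncomputable def removeLetters (S : Set α) (u : List α) : List α :=
  u.filter (fun a => decide (a ∉ S))

/-- `Cond L S`: words `u` such that some `v ∈ L` has `v_{-S}` a factor of `u_{-S}`. -/
def Cond (L : Set (List α)) (S : Set α) : Set (List α) :=
  {u | ∃ v ∈ L, IsFactor (removeLetters S v) (removeLetters S u)}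

open Classical in
/-- Number of occurrences of the letter `a` in the word `u`. -/
noncomputable def countOcc (a : α) (u : List α) : ℕ :=
  u.countP (fun b => decide (b = a))

/-- `T_p(u)`: letters that are not neutral for `L` and occur at least `p` times in `u`. -/
def freqLetters (L : Set (List α)) (p : ℕ) (u : List α) : Set α :=
  {a | ¬ Neutral L a ∧ p ≤ countOcc a u}

/-- Operational semi-extensible ZG condition with threshold `p`. -/
def OperationalSE (L : Set (List α)) (p : ℕ) : Prop :=
  ∀ u : List α, freqLetters L p u = ∅ ∨
    (removeLetters (freqLetters L p u) u ∈ Cond L (freqLetters L p u) ↔ u ∈ L)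

/-- Self-contained semi-extensible ZG condition with threshold `p`. -/
def SelfContainedSE (L : Set (List α)) (p : ℕ) : Prop :=
  ∀ u v : List α, v ∈ L → freqLetters L p u ≠ ∅ →
    IsFactor (removeLetters (freqLetters L p u) v)
             (removeLetters (freqLetters L p u) u) →
    u ∈ L

/-- Syntactic congruence of `L`. -/
def SyntEq (L : Set (List α)) (u v : List α) : Prop :=
  ∀ s t : List α, s ++ u ++ t ∈ L ↔ s ++ v ++ t ∈ L

/-- The setoid on words given by the syntactic congruence of `L`. -/
def syntSetoid (L : Set (List α)) : Setoid (List α) where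
  r := SyntEq L
  iseqv := ⟨fun _ _ _ => Iff.rfl, fun h s t => (h s t).symm,
            fun h1 h2 s t => (h1 s t).trans (h2 s t)⟩

/-- `wpow x k` is the `k`-fold concatenation `x^k`. -/
def wpow (x : List α) : ℕ → List α
  | 0 => []
  | k + 1 => x ++ wpow x k

/-- Algebraic semi-extensible ZG condition for `n`: the ZG equation plus semi-extensibility. -/
def AlgebraicSE (L : Set (List α)) (n : ℕ) : Prop :=
  (∀ x y : List α, SyntEq L (y ++ wpow x (n+1)) (wpow x (n+1) ++ y)) ∧
  (∀ (x y z : List α) (a : α), ¬ Neutral L a → y ∈ L →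
    x ++ y ++ z ++ wpow [a] n ∈ L)

/-- `w[l..r]` with 1-based positions; empty when `r < l`. -/
def wslice (w : List α) (l r : ℕ) : List α := (w.drop (l - 1)).take (r + 1 - l)

/-- The pair `(l, r)` is good: `T_p(w[l..r]) ≠ ∅` and `w[l..r] ∈ Cond(T_p(w[l..r]))`. -/
def Good (L : Set (List α)) (p : ℕ) (w : List α) (l r : ℕ) : Prop :=
  freqLetters L p (wslice w l r) ≠ ∅ ∧
  wslice w l r ∈ Cond L (freqLetters L p (wslice w l r))

/-- The limit `r_l`: least `r ≥ l` such that `(l, r')` is good for all `r ≤ r' ≤ |w|`. -/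
noncomputable def limit (L : Set (List α)) (p : ℕ) (w : List α) (l : ℕ) : ℕ :=
  sInf {r | l ≤ r ∧ ∀ r' : ℕ, r ≤ r' → r' ≤ w.length → Good L p w l r'}


open Classical in
lemma countOcc_le_of_factor {a : α} {u v : List α} (h : IsFactor u v) :
    countOcc a u ≤ countOcc a v := by
  obtain ⟨s, t, rfl⟩ := h
  simp [countOcc, List.countP_append]
  omega

lemma isFactor_trans {u v w : List α} (h1 : IsFactor u v) (h2 : IsFactor v w) :
    IsFactor u w := by
  obtain ⟨s, t, rfl⟩ := h1
  obtain ⟨s', t', rfl⟩ := h2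
  exact ⟨s' ++ s, t ++ t', by simp⟩

lemma removeLetters_factor {S : Set α} {u v : List α} (h : IsFactor u v) :
    IsFactor (removeLetters S u) (removeLetters S v) := by
  obtain ⟨s, t, rfl⟩ := h
  exact ⟨removeLetters S s, removeLetters S t, by simp [removeLetters, List.filter_append]⟩

open Classical in
lemma removeLetters_removeLetters {S S' : Set α} (hSS : S ⊆ S') (u : List α) :
    removeLetters S' (removeLetters S u) = removeLetters S' u := by
  induction u with
  | nil => rfl
  | cons a u ih =>
    by_cases hS : a ∈ S
    · have hS' : a ∈ S' := hSS hS
      simp [removeLetters, List.filter_cons, hS, hS'] at *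
      exact ih
    · by_cases hS' : a ∈ S' <;> simp [removeLetters, List.filter_cons, hS, hS'] at * <;> exact ih

/-- monotonicity of frequent letters and of the `Cond` predicates. -/
theorem cond_monotone {α : Type*} (L : Set (List α)) (p : ℕ)
    (u u' : List α) (hfac : IsFactor u u') :
    freqLetters L p u ⊆ freqLetters L p u' ∧
      (u ∈ Cond L (freqLetters L p u) → u' ∈ Cond L (freqLetters L p u')) := by
  have hsub : freqLetters L p u ⊆ freqLetters L p u' := by
    intro a ha
    exact ⟨ha.1, le_trans ha.2 (countOcc_le_of_factor hfac)⟩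
  refine ⟨hsub, ?_⟩
  rintro ⟨v, hv, hfac2⟩
  refine ⟨v, hv, ?_⟩
  have h1 : removeLetters (freqLetters L p u') v
      = removeLetters (freqLetters L p u') (removeLetters (freqLetters L p u) v) :=
    (removeLetters_removeLetters hsub v).symm
  rw [h1]
  have h2 : IsFactor (removeLetters (freqLetters L p u') (removeLetters (freqLetters L p u) v))
      (removeLetters (freqLetters L p u') (removeLetters (freqLetters L p u) u)) :=
    removeLetters_factor hfac2
  rw [removeLetters_removeLetters hsub u] at h2
  exact isFactor_trans h2 (removeLetters_factor hfac)
end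

section
/- Let L be a regular language over a finite alphabet Σ (i.e., the syntactic congruence ~_L has finitely many classes). The following are equivalent: (1) there exists a positive integer n with x^n ~_L x^{2n} for all words x, such that L satisfies the algebraic semi-extensible ZG condition for n; (2) there exists p ∈ ℕ such that L satisfies the operational semi-extensible ZG condition with threshold p; (3) there exists p ∈ ℕ such that L satisfies the self-contained semi-extensible ZG condition with threshold p. -/
variable {α : Type*}

-- ============ list lemmas ============
theorem wpow_add (x : List α) (a b : ℕ) : wpow x (a + b) = wpow x a ++ wpow x b := by
  induction a with
  | zero => simp [wpow]
  | succ a ih => rw [Nat.succ_add]; simp [wpow, ih]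

theorem wpow_nil (k : ℕ) : wpow ([] : List α) k = [] := by
  induction k with
  | zero => rfl
  | succ k ih => simp [wpow, ih]

theorem mem_wpow {c : α} {x : List α} {k : ℕ} (h : c ∈ wpow x k) : c ∈ x := by
  induction k with
  | zero => simp [wpow] at h
  | succ k ih => rcases List.mem_append.1 h with h | h; exact h; exact ih h

theorem countOcc_append (a : α) (u v : List α) :
    countOcc a (u ++ v) = countOcc a u + countOcc a v := List.countP_append ..

theorem countOcc_nil (a : α) : countOcc a ([] : List α) = 0 := rfl

theorem countOcc_wpow (a : α) (x : List α) (k : ℕ) :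
    countOcc a (wpow x k) = k * countOcc a x := by
  induction k with
  | zero => simp [wpow, countOcc_nil]
  | succ k ih => rw [wpow, countOcc_append, ih]; ring

theorem countOcc_single_self (a : α) : countOcc a [a] = 1 := by
  simp [countOcc]

theorem countOcc_pos_of_mem {a : α} {u : List α} (h : a ∈ u) : 0 < countOcc a u := by
  unfold countOcc
  rw [List.countP_pos_iff]
  exact ⟨a, h, by simp⟩

theorem exists_split_first {b : α} {w : List α} (h : 0 < countOcc b w) :
    ∃ l r, w = l ++ [b] ++ r ∧ countOcc b l = 0 := by
  induction w with
  | nil => simp [countOcc_nil] at h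
  | cons c w ih =>
    by_cases hc : c = b
    · exact ⟨[], w, by simp [hc], rfl⟩
    · have hcw : countOcc b (c :: w) = countOcc b w := by
        unfold countOcc; rw [List.countP_cons]; simp [hc]
      rw [hcw] at h
      obtain ⟨l, r, rfl, hl⟩ := ih h
      refine ⟨c :: l, r, by simp, ?_⟩
      unfold countOcc at hl ⊢; rw [List.countP_cons]; simp [hc, hl]

theorem split_count {b : α} {u : List α} :
    ∀ j, j ≤ countOcc b u → ∃ pre suf, u = pre ++ suf ∧ countOcc b pre = j := by
  intro j
  induction j with
  | zero => intro _; exact ⟨[], u, by simp, rfl⟩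
  | succ j ih =>
    intro hj
    obtain ⟨pre, suf, rfl, hpre⟩ := ih (Nat.le_of_succ_le hj)
    rw [countOcc_append, hpre] at hj
    have hsuf : 0 < countOcc b suf := by omega
    obtain ⟨l, r, rfl, hl⟩ := exists_split_first hsuf
    refine ⟨pre ++ (l ++ [b]), r, by simp, ?_⟩
    rw [countOcc_append, countOcc_append, hpre, hl, countOcc_single_self]

open Classical in
theorem removeLetters_append (S : Set α) (u v : List α) :
    removeLetters S (u ++ v) = removeLetters S u ++ removeLetters S v :=
  List.filter_append ..

open Classical in
theorem removeLetters_cons_mem {S : Set α} {c : α} (h : c ∈ S) (w : List α) :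
    removeLetters S (c :: w) = removeLetters S w := by
  unfold removeLetters; rw [List.filter_cons]; simp [h]

open Classical in
theorem removeLetters_cons_not_mem {S : Set α} {c : α} (h : c ∉ S) (w : List α) :
    removeLetters S (c :: w) = c :: removeLetters S w := by
  unfold removeLetters; rw [List.filter_cons]; simp [h]

theorem removeLetters_idem (S : Set α) (u : List α) :
    removeLetters S (removeLetters S u) = removeLetters S u := by
  unfold removeLetters
  apply List.filter_eq_self.mpr
  intro a ha
  exact (List.mem_filter.1 ha).2

theorem removeLetters_wpow (S : Set α) (x : List α) (k : ℕ) :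
    removeLetters S (wpow x k) = wpow (removeLetters S x) k := by
  induction k with
  | zero => rfl
  | succ k ih => rw [wpow, removeLetters_append, ih]; rfl

theorem removeLetters_eq_nil {S : Set α} {w : List α} (h : ∀ c ∈ w, c ∈ S) :
    removeLetters S w = [] := by
  unfold removeLetters
  apply List.filter_eq_nil_iff.mpr
  intro a ha
  simp [h a ha]

open Classical in
noncomputable def keepLetters (S : Set α) (u : List α) : List α :=
  u.filter (fun a => decide (a ∈ S))

theorem mem_of_mem_keepLetters {S : Set α} {c : α} {w : List α}
    (h : c ∈ keepLetters S w) : c ∈ S := by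
  have := (List.mem_filter.1 h).2
  simpa using this

theorem keepLetters_cons_mem {S : Set α} {c : α} (h : c ∈ S) (w : List α) :
    keepLetters S (c :: w) = c :: keepLetters S w := by
  unfold keepLetters; rw [List.filter_cons]; simp [h]

theorem keepLetters_cons_not_mem {S : Set α} {c : α} (h : c ∉ S) (w : List α) :
    keepLetters S (c :: w) = keepLetters S w := by
  unfold keepLetters; rw [List.filter_cons]; simp [h]

-- ============ SyntEq congruence ============
section Synt
variable {L : Set (List α)}

theorem syntEq_refl (L : Set (List α)) (u : List α) : SyntEq L u u := fun _ _ => Iff.rfl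

theorem SyntEq.symm' {u v : List α} (h : SyntEq L u v) : SyntEq L v u :=
  fun s t => (h s t).symm

theorem SyntEq.trans' {u v w : List α} (h1 : SyntEq L u v) (h2 : SyntEq L v w) :
    SyntEq L u w := fun s t => (h1 s t).trans (h2 s t)

theorem syntEq_append {u v u' v' : List α} (h : SyntEq L u v) (h' : SyntEq L u' v') :
    SyntEq L (u ++ u') (v ++ v') := by
  intro s t
  have h1 := h s (u' ++ t)
  have h2 := h' (s ++ v) t
  simp only [List.append_assoc] at h1 h2 ⊢
  exact h1.trans h2

theorem mem_iff_of_syntEq {u v : List α} (h : SyntEq L u v) : u ∈ L ↔ v ∈ L := by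
  have := h [] []
  simpa using this

end Synt

-- ============ the quotient monoid ============
variable (L : Set (List α))

abbrev QW := Quotient (syntSetoid L)

noncomputable instance : Monoid (QW L) where
  mul := Quotient.map₂ (· ++ ·) (fun _ _ h _ _ h' => syntEq_append h h')
  one := Quotient.mk _ []
  mul_assoc a b c := by
    refine Quotient.inductionOn₃ a b c fun a b c => ?_
    apply Quotient.sound
    show SyntEq L ((a ++ b) ++ c) (a ++ (b ++ c))
    rw [List.append_assoc]
    exact syntEq_refl L _
  one_mul a := by
    refine Quotient.inductionOn a fun a => ?_
    apply Quotient.sound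
    show SyntEq L ([] ++ a) a
    rw [List.nil_append]
    exact syntEq_refl L _
  mul_one a := by
    refine Quotient.inductionOn a fun a => ?_
    apply Quotient.sound
    show SyntEq L (a ++ []) a
    rw [List.append_nil]
    exact syntEq_refl L _

def qmk (u : List α) : QW L := Quotient.mk _ u

variable {L}

theorem qmk_append (u v : List α) : qmk L (u ++ v) = qmk L u * qmk L v := rfl

theorem qmk_nil : qmk L ([] : List α) = 1 := rfl

theorem qmk_cons (c : α) (w : List α) : qmk L (c :: w) = qmk L [c] * qmk L w := rfl

theorem qmk_eq_iff {u v : List α} : qmk L u = qmk L v ↔ SyntEq L u v :=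
  ⟨fun h => Quotient.exact h, fun h => Quotient.sound h⟩

theorem qmk_wpow (x : List α) (k : ℕ) : qmk L (wpow x k) = (qmk L x) ^ k := by
  induction k with
  | zero => rfl
  | succ k ih => rw [wpow, qmk_append, ih, pow_succ']

theorem qmk_surjective : Function.Surjective (qmk L) := fun q =>
  Quotient.inductionOn q (fun w => ⟨w, rfl⟩)

noncomputable def memQ : QW L → Prop :=
  Quotient.lift (· ∈ L) (fun u v h => propext (mem_iff_of_syntEq h))

theorem memQ_qmk (u : List α) : memQ (qmk L u) ↔ u ∈ L := Iff.rfl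

-- ============ neutral letters ============
def NeutralSet (L : Set (List α)) : Set α := {e | Neutral L e}

noncomputable def clean (L : Set (List α)) (w : List α) : List α :=
  removeLetters (NeutralSet L) w

theorem syntEq_cons_of_neutral {c : α} (hc : Neutral L c) (w : List α) :
    SyntEq L (c :: w) w := by
  intro s t
  have := hc s (w ++ t)
  simp only [List.append_assoc] at this ⊢
  constructor
  · intro hx
    exact this.mpr (by simpa using hx)
  · intro hx
    have := this.mp hx
    simpa using this

theorem syntEq_clean (w : List α) : SyntEq L w (clean L w) := by
  induction w with
  | nil => exact syntEq_refl L []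
  | cons c w ih =>
    by_cases hc : Neutral L c
    · have h1 : clean L (c :: w) = clean L w := removeLetters_cons_mem hc w
      rw [h1]
      exact (syntEq_cons_of_neutral hc w).trans' ih
    · have h1 : clean L (c :: w) = c :: clean L w := removeLetters_cons_not_mem hc w
      rw [h1]
      have := syntEq_append (syntEq_refl L [c]) ih
      simpa using this

theorem not_neutral_of_mem_clean {c : α} {w : List α} (h : c ∈ clean L w) :
    ¬ Neutral L c := by
  have := (List.mem_filter.1 h).2
  classical
  exact of_decide_eq_true this

theorem clean_append (u v : List α) : clean L (u ++ v) = clean L u ++ clean L v :=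
  removeLetters_append _ u v

theorem clean_wpow (x : List α) (k : ℕ) : clean L (wpow x k) = wpow (clean L x) k :=
  removeLetters_wpow _ x k

theorem mem_L_iff_clean (w : List α) : w ∈ L ↔ clean L w ∈ L :=
  mem_iff_of_syntEq (syntEq_clean w)

-- ============ generic monoid facts ============
section MonoidFacts
variable {M : Type*} [Monoid M]

def Cen (z : M) : Prop := ∀ r : M, z * r = r * z

theorem Cen.one : Cen (1 : M) := fun r => by rw [one_mul, mul_one]

theorem Cen.mul {a b : M} (ha : Cen a) (hb : Cen b) : Cen (a * b) := fun r => by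
  rw [mul_assoc, hb r, ← mul_assoc, ha r, mul_assoc]

theorem Cen.pow {a : M} (ha : Cen a) (k : ℕ) : Cen (a ^ k) := by
  induction k with
  | zero => simpa using Cen.one
  | succ k ih => rw [pow_succ]; exact ih.mul ha

theorem Cen.left_comm {z : M} (hz : Cen z) (a c : M) : a * (z * c) = z * (a * c) := by
  rw [← mul_assoc, ← hz a, mul_assoc]

theorem Cen.swap {z : M} (hz : Cen z) (a : M) : a * z = z * a := (hz a).symm

theorem idem_pow {e : M} (he : e * e = e) : ∀ k, e ^ (k + 1) = e := by
  intro k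
  induction k with
  | zero => simp
  | succ k ih => rw [pow_succ, ih, he]

theorem pow_of_idem {e : M} (he : e * e = e) :
    ∀ k, 0 < k → e ^ k = e := by
  intro k hk
  induction k with
  | zero => omega
  | succ k ih =>
    rcases Nat.eq_zero_or_pos k with rfl | hk'
    · simp
    · rw [pow_succ, ih hk', he]

theorem mpow_rot (x y : M) (m : ℕ) : (x * y) ^ (m + 1) = x * (y * x) ^ m * y := by
  induction m with
  | zero => simp [mul_assoc]
  | succ m ih =>
    rw [pow_succ', ih]
    rw [pow_succ']
    simp only [mul_assoc]

section Idem
variable {n : ℕ} (hn : 0 < n) (hidem : ∀ q : M, q ^ n = q ^ (2 * n))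

include hidem in
theorem pow_period_step (q : M) (d : ℕ) : q ^ (n + d + n) = q ^ (n + d) := by
  have h2 : q ^ (n + d + n) = q ^ (2 * n) * q ^ d := by
    rw [← pow_add]; congr 1; ring
  rw [h2, ← hidem q, ← pow_add]

include hidem in
theorem pow_period (q : M) (d k : ℕ) : q ^ (n + d + k * n) = q ^ (n + d) := by
  induction k with
  | zero => simp
  | succ k ih =>
    have : n + d + (k + 1) * n = (n + (d + k * n)) + n := by ring
    rw [this, pow_period_step hidem q (d + k * n)]
    rw [show n + (d + k * n) = n + d + k * n by ring, ih]

end Idem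

-- finite monoid: uniform idempotent-power exponent
theorem finite_monoid_exponent (M : Type*) [Monoid M] [Finite M] :
    ∃ n₀ : ℕ, 0 < n₀ ∧ ∀ q : M, q ^ n₀ = q ^ (2 * n₀) := by
  classical
  haveI := Fintype.ofFinite M
  set c := Nat.card M with hc
  refine ⟨(Nat.factorial c), Nat.factorial_pos c, fun q => ?_⟩
  -- pigeonhole among q^0 .. q^c
  have hlt : Fintype.card M < Fintype.card (Fin (c + 1)) := by
    simp [hc, Nat.card_eq_fintype_card]
  obtain ⟨i, j, hne, heq⟩ :=
    Fintype.exists_ne_map_eq_of_card_lt (fun i : Fin (c + 1) => q ^ (i : ℕ)) hlt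
  wlog hij : (i : ℕ) < (j : ℕ) generalizing i j
  · have hne' : (i : ℕ) ≠ (j : ℕ) := fun h => hne (Fin.ext h)
    exact this j i hne.symm heq.symm (by omega)
  set d := (j : ℕ) - (i : ℕ) with hd
  have hd1 : 0 < d := by omega
  have hqi : q ^ (i : ℕ) = q ^ ((i : ℕ) + d) := by
    rw [hd, show (i:ℕ) + ((j:ℕ) - (i:ℕ)) = (j:ℕ) by omega]
    exact heq
  have hshift : ∀ e, q ^ ((i : ℕ) + e) = q ^ ((i : ℕ) + d + e) := by
    intro e
    rw [pow_add, pow_add, ← hqi]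
  have hper : ∀ k e, q ^ ((i : ℕ) + e) = q ^ ((i : ℕ) + e + k * d) := by
    intro k
    induction k with
    | zero => intro e; simp
    | succ k ih =>
      intro e
      have := hshift (e + k * d)
      rw [show (i:ℕ) + e + (k+1) * d = (i:ℕ) + d + (e + k * d) by ring]
      rw [← this, show (i:ℕ) + (e + k * d) = (i:ℕ) + e + k * d by ring] at *
      rw [ih e]
  have hile : (i : ℕ) ≤ (Nat.factorial c) := by
    have : (i : ℕ) ≤ c := by omega
    exact le_trans this (Nat.self_le_factorial c)
  have hdvd : d ∣ (Nat.factorial c) := by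
    apply Nat.dvd_factorial hd1
    omega
  obtain ⟨k, hk⟩ := hdvd
  have he1 : (Nat.factorial c) = (i : ℕ) + ((Nat.factorial c) - (i : ℕ)) := by omega
  calc q ^ (Nat.factorial c) = q ^ ((i:ℕ) + ((Nat.factorial c) - (i:ℕ))) := by rw [← he1]
    _ = q ^ ((i:ℕ) + ((Nat.factorial c) - (i:ℕ)) + k * d) := hper k _
    _ = q ^ (2 * (Nat.factorial c)) := by congr 1; rw [mul_comm k d, ← hk]; omega

end MonoidFacts

-- ============ core ZG monoid computations ============
section ZGCore
variable {M : Type*} [Monoid M] {n : ℕ} (hn : 0 < n)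
  (hidem : ∀ q : M, q ^ n = q ^ (2 * n))
  (hzg : ∀ q r : M, q ^ (n + 1) * r = r * q ^ (n + 1))

include hidem hzg in
theorem cen_pow_of_le (q : M) {m : ℕ} (hm : n ≤ m) : Cen (q ^ m) := by
  obtain ⟨d, rfl⟩ := Nat.exists_eq_add_of_le hm
  have key : q ^ (n + d) = (q ^ (n + d)) ^ (n + 1) := by
    have h1 := pow_period hidem q d (n + d)
    calc q ^ (n + d) = q ^ (n + d + (n + d) * n) := h1.symm
      _ = q ^ ((n + d) * (n + 1)) := by congr 1; ring
      _ = (q ^ (n + d)) ^ (n + 1) := pow_mul q (n + d) (n + 1)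
  intro r
  rw [key]
  exact hzg (q ^ (n + d)) r

include hidem in
theorem idem_npow (q : M) : q ^ n * q ^ n = q ^ n := by
  have h1 := pow_period hidem q 0 1
  rw [← pow_add]
  calc q ^ (n + n) = q ^ (n + 0 + 1 * n) := by congr 1; ring
    _ = q ^ (n + 0) := h1
    _ = q ^ n := by rw [Nat.add_zero]

include hn hidem hzg in
theorem rot_absorb (X Y : M) : (X * Y) ^ n * (Y * X) ^ n = (X * Y) ^ n := by
  obtain ⟨m, hm⟩ : ∃ m, n = m + 1 := ⟨n - 1, by omega⟩
  have hcen : Cen ((Y * X) ^ n) := cen_pow_of_le hidem hzg (Y * X) le_rfl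
  have h3n : (X * Y) ^ n = (X * Y) ^ (3 * n) := by
    have := pow_period hidem (X * Y) 0 2
    calc (X * Y) ^ n = (X * Y) ^ (n + 0) := by rw [Nat.add_zero]
      _ = (X * Y) ^ (n + 0 + 2 * n) := this.symm
      _ = (X * Y) ^ (3 * n) := by congr 1; ring
  have h4n : (X * Y) ^ (4 * n) = (X * Y) ^ n := by
    have := pow_period hidem (X * Y) 0 3
    calc (X * Y) ^ (4 * n) = (X * Y) ^ (n + 0 + 3 * n) := by congr 1; ring
      _ = (X * Y) ^ (n + 0) := this
      _ = (X * Y) ^ n := by rw [Nat.add_zero]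
  calc (X * Y) ^ n * (Y * X) ^ n
      = (X * Y) ^ (3 * n) * (Y * X) ^ n := by rw [← h3n]
    _ = (X * Y) ^ ((3 * m + 2) + 1) * (Y * X) ^ n := by
        rw [show 3 * n = (3 * m + 2) + 1 by omega]
    _ = (X * (Y * X) ^ (3 * m + 2) * Y) * (Y * X) ^ n := by rw [mpow_rot]
    _ = X * (Y * X) ^ (3 * m + 2) * ((Y * X) ^ n * Y) := by
        rw [mul_assoc (X * (Y * X) ^ (3 * m + 2)) Y ((Y * X) ^ n), ← hcen Y]
    _ = X * ((Y * X) ^ (3 * m + 2) * (Y * X) ^ n) * Y := by simp only [mul_assoc]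
    _ = X * (Y * X) ^ (4 * m + 3) * Y := by
        rw [← pow_add, show 3 * m + 2 + n = 4 * m + 3 by omega]
    _ = (X * Y) ^ ((4 * m + 3) + 1) := (mpow_rot X Y (4 * m + 3)).symm
    _ = (X * Y) ^ (4 * n) := by rw [show (4 * m + 3) + 1 = 4 * n by omega]
    _ = (X * Y) ^ n := h4n

include hn hidem hzg in
theorem unit_absorb (B D : M) : (B * D) ^ n * B ^ n = (B * D) ^ n := by
  obtain ⟨m, hm⟩ : ∃ m, n = m + 1 := ⟨n - 1, by omega⟩
  set e' := (B * D) ^ n with he'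
  have hcen : Cen e' := cen_pow_of_le hidem hzg (B * D) le_rfl
  have hidem' : e' * e' = e' := idem_npow hidem (B * D)
  set H := (D * B) ^ m * D with hH
  have hBH : B * H = e' := by
    rw [hH, he', hm, ← mul_assoc, ← mpow_rot]
  set x := e' * B with hx
  set y := H * e' with hy
  have hxy : x * y = e' := by
    rw [hx, hy]
    calc e' * B * (H * e') = e' * (B * H) * e' := by simp only [mul_assoc]
      _ = e' * e' * e' := by rw [hBH]
      _ = e' := by rw [hidem', hidem']
  have hxe : x * e' = x := by
    rw [hx]
    calc e' * B * e' = e' * (B * e') := by rw [mul_assoc]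
      _ = e' * (e' * B) := by rw [(hcen B).symm]
      _ = e' * e' * B := by rw [mul_assoc]
      _ = e' * B := by rw [hidem']
  have hxyk : ∀ k, x ^ (k + 1) * y ^ (k + 1) = e' := by
    intro k
    induction k with
    | zero => simpa using hxy
    | succ k ih =>
      calc x ^ (k + 2) * y ^ (k + 2) = (x * x ^ (k + 1)) * (y ^ (k + 1) * y) := by
            rw [pow_succ' x (k + 1), pow_succ y (k + 1)]
        _ = x * (x ^ (k + 1) * y ^ (k + 1)) * y := by simp only [mul_assoc]
        _ = x * e' * y := by rw [ih]
        _ = x * y := by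
            rw [show x * e' * y = (x * e') * y from rfl, hxe]
        _ = e' := hxy
  have hxn_e : x ^ n = x ^ n * e' := by
    rw [hm, pow_succ, mul_assoc, hxe]
  have hxn : x ^ n = e' := by
    have h2n : x ^ (n + n) = x ^ n := by
      have := pow_period hidem x 0 1
      calc x ^ (n + n) = x ^ (n + 0 + 1 * n) := by congr 1; ring
        _ = x ^ (n + 0) := this
        _ = x ^ n := by rw [Nat.add_zero]
    calc x ^ n = x ^ n * e' := hxn_e
      _ = x ^ n * (x ^ n * y ^ n) := by rw [hm, hxyk m]
      _ = (x ^ n * x ^ n) * y ^ n := by simp only [mul_assoc]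
      _ = x ^ (n + n) * y ^ n := by rw [pow_add]
      _ = x ^ n * y ^ n := by rw [h2n]
      _ = e' := by rw [hm, hxyk m]
  have hsplit : x ^ n = e' * B ^ n := by
    rw [hx]
    have hc : Commute e' B := (hcen B)
    rw [hc.mul_pow]
    congr 1
    rw [hm]
    exact idem_pow hidem' m
  rw [← hsplit, hxn]

include hn hidem hzg in
theorem absorb_core (Pre R A B C : M) (hrep : Pre * (A * (B * C)) = Pre) :
    (Pre * R) * B ^ n = Pre * R := by
  set Y := A * (B * C) with hY
  have hYk : ∀ k, Pre * Y ^ k = Pre := by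
    intro k
    induction k with
    | zero => simp
    | succ k ih => rw [pow_succ', ← mul_assoc, hrep, ih]
  have hcenY : Cen (Y ^ n) := cen_pow_of_le hidem hzg Y le_rfl
  have he'' : Y ^ n * ((B * C) * A) ^ n = Y ^ n := rot_absorb hn hidem hzg A (B * C)
  have he''' : Y ^ n * (B * (C * A)) ^ n = Y ^ n := by
    rw [← mul_assoc B C A]
    exact he''
  have hu : (B * (C * A)) ^ n * B ^ n = (B * (C * A)) ^ n := unit_absorb hn hidem hzg B (C * A)
  have hYB : Y ^ n * B ^ n = Y ^ n := by
    calc Y ^ n * B ^ n = Y ^ n * (B * (C * A)) ^ n * B ^ n := by rw [he''']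
      _ = Y ^ n * ((B * (C * A)) ^ n * B ^ n) := by rw [mul_assoc]
      _ = Y ^ n * (B * (C * A)) ^ n := by rw [hu]
      _ = Y ^ n := he'''
  calc (Pre * R) * B ^ n = ((Pre * Y ^ n) * R) * B ^ n := by rw [hYk n]
    _ = ((Pre * R) * Y ^ n) * B ^ n := by
        rw [mul_assoc Pre (Y ^ n) R, hcenY R, ← mul_assoc]
    _ = (Pre * R) * (Y ^ n * B ^ n) := by rw [mul_assoc]
    _ = (Pre * R) * Y ^ n := by rw [hYB]
    _ = (Pre * Y ^ n) * R := by rw [mul_assoc Pre R (Y^n), (hcenY R).symm, ← mul_assoc]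
    _ = Pre * R := by rw [hYk n]

end ZGCore

-- ============ direction (1) → (3) machinery ============
section Dir13
variable {L : Set (List α)} {n : ℕ}

noncomputable def eProd (L : Set (List α)) (n : ℕ) : List α → QW L
  | [] => 1
  | c :: l => (qmk L [c]) ^ n * eProd L n l

def eWord (n : ℕ) : List α → List α
  | [] => []
  | c :: l => wpow [c] n ++ eWord n l

theorem qmk_eWord (l : List α) : qmk L (eWord n l) = eProd L n l := by
  induction l with
  | nil => rfl
  | cons c l ih => rw [eWord, eProd, qmk_append, qmk_wpow, ih]

variable (hn : 0 < n) (hidemQ : ∀ q : QW L, q ^ n = q ^ (2 * n))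
  (hzgQ : ∀ q r : QW L, q ^ (n + 1) * r = r * q ^ (n + 1))

include hidemQ hzgQ in
theorem eProd_cen (ts : List α) : Cen (eProd L n ts) := by
  induction ts with
  | nil => exact Cen.one
  | cons c l ih => exact (cen_pow_of_le hidemQ hzgQ (qmk L [c]) le_rfl).mul ih

include hidemQ hzgQ in
theorem eProd_idem (ts : List α) : eProd L n ts * eProd L n ts = eProd L n ts := by
  induction ts with
  | nil => simp [eProd]
  | cons c l ih =>
    rw [eProd]
    set A := (qmk L [c]) ^ n
    set P := eProd L n l
    have hA : Cen A := cen_pow_of_le hidemQ hzgQ (qmk L [c]) le_rfl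
    calc A * P * (A * P) = A * (P * A) * P := by simp only [mul_assoc]
      _ = A * (A * P) * P := by rw [← hA P]
      _ = (A * A) * (P * P) := by simp only [mul_assoc]
      _ = A * P := by rw [idem_npow hidemQ, ih]

include hidemQ hzgQ in
theorem eProd_absorb_mem {b : α} {ts : List α} (hb : b ∈ ts) :
    eProd L n ts * (qmk L [b]) ^ n = eProd L n ts := by
  induction ts with
  | nil => simp at hb
  | cons c l ih =>
    rw [eProd]
    set P := eProd L n l
    have hP : Cen P := eProd_cen hidemQ hzgQ l
    rcases List.mem_cons.1 hb with rfl | hb'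
    · calc (qmk L [b]) ^ n * P * (qmk L [b]) ^ n
          = (qmk L [b]) ^ n * ((qmk L [b]) ^ n * P) := by
            rw [mul_assoc, hP ((qmk L [b]) ^ n)]
        _ = ((qmk L [b]) ^ n * (qmk L [b]) ^ n) * P := by rw [mul_assoc]
        _ = (qmk L [b]) ^ n * P := by rw [idem_npow hidemQ]
    · rw [mul_assoc, ih hb']

theorem eProd_absorbed {u : List α} {ts : List α}
    (h : ∀ c ∈ ts, qmk L u * (qmk L [c]) ^ n = qmk L u) :
    qmk L u * eProd L n ts = qmk L u := by
  induction ts with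
  | nil => simp [eProd]
  | cons c l ih =>
    rw [eProd, ← mul_assoc, h c (by simp)]
    exact ih (fun c' hc' => h c' (by simp [hc']))

include hidemQ hzgQ in
theorem cen_eProd_mul_letter {b : α} {ts : List α} (hb : b ∈ ts) :
    Cen (eProd L n ts * qmk L [b]) := by
  have h1 : eProd L n ts * qmk L [b] = eProd L n ts * (qmk L [b]) ^ (n + 1) := by
    rw [pow_succ, ← mul_assoc, eProd_absorb_mem hidemQ hzgQ hb]
  rw [h1]
  exact (eProd_cen hidemQ hzgQ ts).mul
    (cen_pow_of_le hidemQ hzgQ (qmk L [b]) (Nat.le_succ n))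

include hidemQ hzgQ in
theorem eProd_mul_split (c : α) (m : List α) (ts : List α) :
    eProd L n ts * qmk L (c :: m) =
      (eProd L n ts * qmk L [c]) * (eProd L n ts * qmk L m) := by
  have hP : Cen (eProd L n ts) := eProd_cen hidemQ hzgQ ts
  have hidem' := eProd_idem hidemQ hzgQ ts
  calc eProd L n ts * qmk L (c :: m)
      = eProd L n ts * (qmk L [c] * qmk L m) := rfl
    _ = (eProd L n ts * eProd L n ts) * (qmk L [c] * qmk L m) := by rw [hidem']
    _ = eProd L n ts * ((eProd L n ts * qmk L [c]) * qmk L m) := by simp only [mul_assoc]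
    _ = eProd L n ts * ((qmk L [c] * eProd L n ts) * qmk L m) := by rw [hP (qmk L [c])]
    _ = (eProd L n ts * qmk L [c]) * (eProd L n ts * qmk L m) := by simp only [mul_assoc]

include hidemQ hzgQ in
theorem cen_eProd_mul_word {m : List α} {ts : List α} (hm : ∀ c ∈ m, c ∈ ts) :
    Cen (eProd L n ts * qmk L m) := by
  induction m with
  | nil => rw [qmk_nil, mul_one]; exact eProd_cen hidemQ hzgQ ts
  | cons c m' ih =>
    rw [eProd_mul_split hidemQ hzgQ c m' ts]
    exact (cen_eProd_mul_letter hidemQ hzgQ (hm c (by simp))).mul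
      (ih (fun c' hc' => hm c' (by simp [hc'])))

include hn hidemQ hzgQ in
theorem pow_n_eProd_mul_word {m : List α} {ts : List α} (hm : ∀ c ∈ m, c ∈ ts) :
    (eProd L n ts * qmk L m) ^ n = eProd L n ts := by
  induction m with
  | nil =>
    rw [qmk_nil, mul_one]
    exact pow_of_idem (eProd_idem hidemQ hzgQ ts) n hn
  | cons c m' ih =>
    rw [eProd_mul_split hidemQ hzgQ c m' ts]
    have h1 : Cen (eProd L n ts * qmk L [c]) :=
      cen_eProd_mul_letter hidemQ hzgQ (hm c (by simp))
    have h2 : Commute (eProd L n ts * qmk L [c]) (eProd L n ts * qmk L m') :=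
      h1 _
    rw [h2.mul_pow]
    have h3 : (eProd L n ts * qmk L [c]) ^ n = eProd L n ts := by
      have hc : Commute (eProd L n ts) (qmk L [c]) := eProd_cen hidemQ hzgQ ts _
      rw [hc.mul_pow]
      rw [pow_of_idem (eProd_idem hidemQ hzgQ ts) n hn,
          eProd_absorb_mem hidemQ hzgQ (hm c (by simp))]
    rw [h3, ih (fun c' hc' => hm c' (by simp [hc']))]
    exact eProd_idem hidemQ hzgQ ts

include hidemQ hzgQ in
theorem extraction {T : Set α} {ts : List α} (hts : ∀ c, c ∈ T ↔ c ∈ ts) :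
    ∀ w : List α, eProd L n ts * qmk L w =
      qmk L (removeLetters T w) * (eProd L n ts * qmk L (keepLetters T w)) := by
  intro w
  induction w with
  | nil =>
    show eProd L n ts * qmk L [] = qmk L (removeLetters T []) * (eProd L n ts * qmk L (keepLetters T []))
    rw [show removeLetters T ([] : List α) = [] from rfl,
        show keepLetters T ([] : List α) = [] from rfl]
    rw [qmk_nil, mul_one, one_mul]
  | cons c w' ih =>
    set P := eProd L n ts
    have hP : Cen P := eProd_cen hidemQ hzgQ ts
    by_cases hc : c ∈ T
    · have hkp : ∀ c' ∈ keepLetters T w', c' ∈ ts :=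
        fun c' hc' => (hts c').1 (mem_of_mem_keepLetters hc')
      have hcenC : Cen (P * qmk L [c]) :=
        cen_eProd_mul_letter hidemQ hzgQ ((hts c).1 hc)
      have hcenK : Cen (P * qmk L (keepLetters T w')) :=
        cen_eProd_mul_word hidemQ hzgQ hkp
      have key : (P * qmk L (keepLetters T w')) * (P * qmk L [c])
          = P * qmk L (c :: keepLetters T w') := by
        rw [eProd_mul_split hidemQ hzgQ c (keepLetters T w') ts]
        exact hcenK _
      calc P * qmk L (c :: w')
          = (P * qmk L [c]) * (P * qmk L w') := eProd_mul_split hidemQ hzgQ c w' ts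
        _ = (P * qmk L w') * (P * qmk L [c]) := hcenC _
        _ = (qmk L (removeLetters T w') * (P * qmk L (keepLetters T w'))) * (P * qmk L [c]) := by
            rw [ih]
        _ = qmk L (removeLetters T w') *
              ((P * qmk L (keepLetters T w')) * (P * qmk L [c])) := by rw [mul_assoc]
        _ = qmk L (removeLetters T w') * (P * qmk L (c :: keepLetters T w')) := by rw [key]
        _ = qmk L (removeLetters T (c :: w')) * (P * qmk L (keepLetters T (c :: w'))) := by
            rw [removeLetters_cons_mem hc, keepLetters_cons_mem hc]
    · calc P * qmk L (c :: w')
          = P * (qmk L [c] * qmk L w') := by rw [qmk_cons]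
        _ = qmk L [c] * (P * qmk L w') := (hP.left_comm _ _).symm
        _ = qmk L [c] * (qmk L (removeLetters T w') * (P * qmk L (keepLetters T w'))) := by
            rw [ih]
        _ = (qmk L [c] * qmk L (removeLetters T w')) * (P * qmk L (keepLetters T w')) := by
            rw [mul_assoc]
        _ = qmk L (removeLetters T (c :: w')) * (P * qmk L (keepLetters T (c :: w'))) := by
            rw [removeLetters_cons_not_mem hc, keepLetters_cons_not_mem hc,
                qmk_cons c (removeLetters T w')]

end Dir13

-- ============ absorption via pigeonhole ============
section Absorb
variable {L : Set (List α)} {n : ℕ}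
variable (hn : 0 < n) (hidemQ : ∀ q : QW L, q ^ n = q ^ (2 * n))
  (hzgQ : ∀ q r : QW L, q ^ (n + 1) * r = r * q ^ (n + 1))

include hn hidemQ hzgQ in
theorem absorb (hreg : Finite (QW L)) {u : List α} {b : α}
    (hb : Nat.card (QW L) + 1 ≤ countOcc b u) :
    qmk L u * (qmk L [b]) ^ n = qmk L u := by
  classical
  haveI := hreg
  haveI := Fintype.ofFinite (QW L)
  set c := Nat.card (QW L) with hc
  have hsplit : ∀ i : Fin (c + 1),
      ∃ pre suf, u = pre ++ suf ∧ countOcc b pre = (i : ℕ) + 1 := by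
    intro i
    apply split_count
    have := i.isLt
    omega
  choose pre suf hu hcount using hsplit
  have hlt : Fintype.card (QW L) < Fintype.card (Fin (c + 1)) := by
    simp [hc, Nat.card_eq_fintype_card]
  obtain ⟨i, j, hne, heqq⟩ :=
    Fintype.exists_ne_map_eq_of_card_lt (fun i : Fin (c + 1) => qmk L (pre i)) hlt
  wlog hij : (i : ℕ) < (j : ℕ) generalizing i j
  · have hne' : (i : ℕ) ≠ (j : ℕ) := fun h => hne (Fin.ext h)
    exact this j i hne.symm heqq.symm (by omega)
  -- pre i is a strict prefix of pre j
  have hpi : pre i <+: u := ⟨suf i, (hu i).symm⟩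
  have hpj : pre j <+: u := ⟨suf j, (hu j).symm⟩
  have hpre : pre i <+: pre j := by
    rcases List.prefix_or_prefix_of_prefix hpi hpj with h | h
    · exact h
    · obtain ⟨w, hw⟩ := h
      exfalso
      have : countOcc b (pre i) = countOcc b (pre j) + countOcc b w := by
        rw [← countOcc_append, hw]
      rw [hcount i, hcount j] at this
      omega
  obtain ⟨y, hy⟩ := hpre
  have hyc : 0 < countOcc b y := by
    have : countOcc b (pre j) = countOcc b (pre i) + countOcc b y := by
      rw [← countOcc_append, hy]
    rw [hcount i, hcount j] at this
    omega
  obtain ⟨l, r, hlr, _⟩ := exists_split_first hyc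
  -- representation of u
  have hurep : u = pre i ++ y ++ suf j := by rw [hu j, ← hy]
  have hrep : qmk L (pre i) * qmk L y = qmk L (pre i) := by
    rw [← qmk_append, hy, ← heqq]
  have hyq : qmk L y = qmk L l * (qmk L [b] * qmk L r) := by
    rw [hlr, List.append_assoc, qmk_append, qmk_append]
  have hrep' : qmk L (pre i) * (qmk L l * (qmk L [b] * qmk L r)) = qmk L (pre i) := by
    rw [← hyq, hrep]
  have hcore := absorb_core hn hidemQ hzgQ (qmk L (pre i)) (qmk L (suf j))
    (qmk L l) (qmk L [b]) (qmk L r) hrep'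
  have hufact : qmk L u = qmk L (pre i) * qmk L (suf j) := by
    rw [hurep, qmk_append, qmk_append, hrep]
  rw [hufact]
  exact hcore

end Absorb

-- ============ final assembly computation (abstract) ============
theorem assembly {M : Type*} [Monoid M] {n : ℕ} (hn : 0 < n)
    (U P S V V' Tt Du Dv An : M)
    (hPc : Cen P) (hγc : Cen (P * Dv)) (hδc : Cen ((P * Dv) * An))
    (hδn : ((P * Dv) * An) ^ n = P)
    (hF1 : U * P = U)
    (hF2 : P * U = ((S * V') * Tt) * (P * Du))
    (hF3 : P * V = V' * (P * Dv)) :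
    (((P * S) * V) * ((Tt * Du) * ((P * Dv) * An) ^ (n - 1))) * An = U := by
  calc (((P * S) * V) * ((Tt * Du) * ((P * Dv) * An) ^ (n - 1))) * An
      = P * (S * (V * (Tt * (Du * (((P * Dv) * An) ^ (n - 1) * An))))) := by
        simp only [mul_assoc]
    _ = S * (P * (V * (Tt * (Du * (((P * Dv) * An) ^ (n - 1) * An))))) := by
        rw [← hPc.left_comm]
    _ = S * ((P * V) * (Tt * (Du * (((P * Dv) * An) ^ (n - 1) * An)))) := by
        rw [← mul_assoc P V]
    _ = S * ((V' * (P * Dv)) * (Tt * (Du * (((P * Dv) * An) ^ (n - 1) * An)))) := by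
        rw [hF3]
    _ = S * (V' * ((P * Dv) * (Tt * (Du * (((P * Dv) * An) ^ (n - 1) * An))))) := by
        rw [mul_assoc]
    _ = S * (V' * (Tt * ((P * Dv) * (Du * (((P * Dv) * An) ^ (n - 1) * An))))) := by
        rw [← hγc.left_comm]
    _ = S * (V' * (Tt * (Du * ((P * Dv) * (((P * Dv) * An) ^ (n - 1) * An))))) := by
        rw [← hγc.left_comm]
    _ = S * (V' * (Tt * (Du * (((P * Dv) * An) ^ (n - 1) * ((P * Dv) * An))))) := by
        rw [(hδc.pow (n - 1)).left_comm (P * Dv) An]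
    _ = S * (V' * (Tt * (Du * ((P * Dv) * An) ^ n))) := by
        rw [← pow_succ, Nat.sub_add_cancel hn]
    _ = S * (V' * (Tt * (Du * P))) := by rw [hδn]
    _ = S * (V' * (Tt * (P * Du))) := by rw [← hPc Du]
    _ = ((S * V') * Tt) * (P * Du) := by simp only [mul_assoc]
    _ = P * U := hF2.symm
    _ = U * P := hPc U
    _ = U := hF1

-- ============ direction (1) → (3) ============
theorem dir13 [Finite α] (L : Set (List α)) (hreg : Finite (QW L))
    (n : ℕ) (hn : 0 < n)
    (hidem : ∀ x : List α, SyntEq L (wpow x n) (wpow x (2 * n)))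
    (halg : AlgebraicSE L n) :
    SelfContainedSE L (Nat.card (QW L) + 1) := by
  classical
  obtain ⟨hZG, hsemi⟩ := halg
  haveI := hreg
  have hidemQ : ∀ q : QW L, q ^ n = q ^ (2 * n) := by
    intro q; obtain ⟨x, rfl⟩ := qmk_surjective q
    rw [← qmk_wpow, ← qmk_wpow]; exact Quotient.sound (hidem x)
  have hzgQ : ∀ q r : QW L, q ^ (n + 1) * r = r * q ^ (n + 1) := by
    intro q r
    obtain ⟨x, rfl⟩ := qmk_surjective q
    obtain ⟨y, rfl⟩ := qmk_surjective r
    rw [← qmk_wpow, ← qmk_append, ← qmk_append]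
    exact Quotient.sound ((hZG x y).symm')
  intro u v hv hTne hfac
  have hTfin : (freqLetters L (Nat.card (QW L) + 1) u).Finite := Set.toFinite _
  obtain ⟨a, haT⟩ := Set.nonempty_iff_ne_empty.2 hTne
  obtain ⟨s, t, heq⟩ := hfac
  set T := freqLetters L (Nat.card (QW L) + 1) u with hT0
  set ts := hTfin.toFinset.toList with hts0
  have hts : ∀ c, c ∈ T ↔ c ∈ ts := by
    intro c; rw [hts0, Finset.mem_toList, Set.Finite.mem_toFinset]
  have habs : ∀ c ∈ ts, qmk L u * (qmk L [c]) ^ n = qmk L u := by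
    intro c hc
    have hcT : c ∈ T := (hts c).2 hc
    exact absorb hn hidemQ hzgQ hreg hcT.2
  have hPc : Cen (eProd L n ts) := eProd_cen hidemQ hzgQ ts
  have F1 : qmk L u * eProd L n ts = qmk L u := eProd_absorbed habs
  have F2 := extraction hidemQ hzgQ hts u
  have F3 := extraction hidemQ hzgQ hts v
  have hdv_mem : ∀ c ∈ keepLetters T v, c ∈ ts :=
    fun c hc => (hts c).1 (mem_of_mem_keepLetters hc)
  have hdu_mem : ∀ c ∈ keepLetters T u, c ∈ ts :=
    fun c hc => (hts c).1 (mem_of_mem_keepLetters hc)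
  have hγc : Cen (eProd L n ts * qmk L (keepLetters T v)) :=
    cen_eProd_mul_word hidemQ hzgQ hdv_mem
  have hAc : Cen ((qmk L [a]) ^ n) := cen_pow_of_le hidemQ hzgQ (qmk L [a]) le_rfl
  have hδc : Cen ((eProd L n ts * qmk L (keepLetters T v)) * (qmk L [a]) ^ n) :=
    hγc.mul hAc
  have hδn : ((eProd L n ts * qmk L (keepLetters T v)) * (qmk L [a]) ^ n) ^ n
      = eProd L n ts := by
    have hcomm : Commute (eProd L n ts * qmk L (keepLetters T v)) ((qmk L [a]) ^ n) :=
      hγc _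
    rw [hcomm.mul_pow, pow_n_eProd_mul_word hn hidemQ hzgQ hdv_mem]
    rw [pow_of_idem (idem_npow hidemQ (qmk L [a])) n hn]
    exact eProd_absorb_mem hidemQ hzgQ ((hts a).1 haT)
  -- the witness word
  have hDwq : qmk L (eWord n ts ++ (keepLetters T v ++ wpow [a] n))
      = (eProd L n ts * qmk L (keepLetters T v)) * (qmk L [a]) ^ n := by
    rw [qmk_append, qmk_append, qmk_eWord, qmk_wpow, mul_assoc]
  have hW : (eWord n ts ++ s) ++ v ++
      (t ++ keepLetters T u ++ wpow (eWord n ts ++ (keepLetters T v ++ wpow [a] n)) (n - 1))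
      ++ wpow [a] n ∈ L :=
    hsemi (eWord n ts ++ s) v
      (t ++ keepLetters T u ++ wpow (eWord n ts ++ (keepLetters T v ++ wpow [a] n)) (n - 1))
      a haT.1 hv
  -- main computation
  have hF2' : eProd L n ts * qmk L u =
      ((qmk L s * qmk L (removeLetters T v)) * qmk L t) *
        (eProd L n ts * qmk L (keepLetters T u)) := by
    rw [F2, heq, qmk_append, qmk_append]
  have hq : qmk L ((eWord n ts ++ s) ++ v ++
      (t ++ keepLetters T u ++ wpow (eWord n ts ++ (keepLetters T v ++ wpow [a] n)) (n - 1))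
      ++ wpow [a] n) = qmk L u := by
    have hsplit : qmk L ((eWord n ts ++ s) ++ v ++
        (t ++ keepLetters T u ++ wpow (eWord n ts ++ (keepLetters T v ++ wpow [a] n)) (n - 1))
        ++ wpow [a] n) =
        (((eProd L n ts * qmk L s) * qmk L v) *
          ((qmk L t * qmk L (keepLetters T u)) *
            ((eProd L n ts * qmk L (keepLetters T v)) * (qmk L [a]) ^ n) ^ (n - 1))) *
          (qmk L [a]) ^ n := by
      rw [qmk_append, qmk_append, qmk_append, qmk_append, qmk_append, qmk_append,
          qmk_eWord, qmk_wpow, qmk_wpow, hDwq]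
    rw [hsplit]
    exact assembly hn (qmk L u) (eProd L n ts) (qmk L s) (qmk L v)
      (qmk L (removeLetters T v)) (qmk L t) (qmk L (keepLetters T u))
      (qmk L (keepLetters T v)) ((qmk L [a]) ^ n)
      hPc hγc hδc hδn F1 hF2' F3
  exact (mem_iff_of_syntEq (qmk_eq_iff.1 hq)).1 hW

-- ============ directions (2) ↔ (3) ============
theorem dir23 (L : Set (List α)) (p : ℕ) (h : OperationalSE L p) : SelfContainedSE L p := by
  intro u v hv hTne hfac
  rcases h u with h0 | hiff
  · exact absurd h0 hTne
  · exact hiff.1 ⟨v, hv, by rwa [removeLetters_idem]⟩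

theorem dir32 (L : Set (List α)) (p : ℕ) (h : SelfContainedSE L p) : OperationalSE L p := by
  intro u
  by_cases hT : freqLetters L p u = ∅
  · exact Or.inl hT
  · refine Or.inr ⟨?_, ?_⟩
    · rintro ⟨v, hv, hfac⟩
      rw [removeLetters_idem] at hfac
      exact h u v hv hT hfac
    · intro hu
      exact ⟨u, hu, by rw [removeLetters_idem]; exact ⟨[], [], by simp⟩⟩

-- ============ direction (3) → (1) ============
theorem zg_core (L : Set (List α)) {p n : ℕ} (hsc : SelfContainedSE L p) (hpn : p ≤ n + 1)
    (x u₁ u₂ S1 S2 Y1 Y2 : List α)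
    (e₁ : clean L u₁ = S1 ++ wpow (clean L x) (n + 1) ++ S2)
    (e₂ : clean L u₂ = Y1 ++ wpow (clean L x) (n + 1) ++ Y2)
    (hS : S1 ++ S2 = Y1 ++ Y2)
    (h₂ : u₂ ∈ L) : u₁ ∈ L := by
  by_cases hx : clean L x = []
  · have hcc : clean L u₁ = clean L u₂ := by
      rw [e₁, e₂, hx, wpow_nil]
      simpa using hS
    rw [mem_L_iff_clean u₁, hcc, ← mem_L_iff_clean u₂]
    exact h₂
  · obtain ⟨a, ha⟩ := List.exists_mem_of_ne_nil _ hx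
    set T := freqLetters L p (clean L u₁) with hT0
    have hxT : ∀ c ∈ clean L x, c ∈ T := by
      intro c hc
      refine ⟨not_neutral_of_mem_clean hc, ?_⟩
      have h1 : 0 < countOcc c (clean L x) := countOcc_pos_of_mem hc
      have h2 : countOcc c (clean L u₁) =
          countOcc c S1 + (n + 1) * countOcc c (clean L x) + countOcc c S2 := by
        rw [e₁, countOcc_append, countOcc_append, countOcc_wpow]
      have h3 : n + 1 ≤ (n + 1) * countOcc c (clean L x) :=
        Nat.le_mul_of_pos_right _ h1
      omega
    have hremx : removeLetters T (wpow (clean L x) (n + 1)) = [] := by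
      rw [removeLetters_wpow, removeLetters_eq_nil hxT, wpow_nil]
    have hTne : T ≠ ∅ := Set.nonempty_iff_ne_empty.1 ⟨a, hxT a ha⟩
    have hkey : removeLetters T (clean L u₁) = removeLetters T (clean L u₂) := by
      have hS' : removeLetters T S1 ++ removeLetters T S2 =
          removeLetters T Y1 ++ removeLetters T Y2 := by
        rw [← removeLetters_append, ← removeLetters_append, hS]
      rw [e₁, e₂, removeLetters_append, removeLetters_append,
          removeLetters_append, removeLetters_append, hremx]
      simpa using hS'
    have hfac : IsFactor (removeLetters T (clean L u₂)) (removeLetters T (clean L u₁)) :=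
      ⟨[], [], by simp [hkey]⟩
    have h₂' : clean L u₂ ∈ L := (mem_L_iff_clean u₂).1 h₂
    exact (mem_L_iff_clean u₁).2 (hsc (clean L u₁) (clean L u₂) h₂' hTne hfac)

theorem dir31 (L : Set (List α)) (hreg : Finite (QW L)) (p : ℕ)
    (hsc : SelfContainedSE L p) :
    ∃ n : ℕ, 0 < n ∧ (∀ x : List α, SyntEq L (wpow x n) (wpow x (2 * n))) ∧
      AlgebraicSE L n := by
  haveI := hreg
  obtain ⟨n₀, hn₀, hidem₀⟩ := finite_monoid_exponent (QW L)
  set n := n₀ * (p + 1) with hn0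
  have hn : 0 < n := by positivity
  have hpn : p ≤ n := by
    have : p + 1 ≤ n₀ * (p + 1) := Nat.le_mul_of_pos_left _ hn₀
    omega
  refine ⟨n, hn, ?_, ?_, ?_⟩
  · -- idempotency
    intro x
    apply qmk_eq_iff.1
    rw [qmk_wpow, qmk_wpow]
    calc (qmk L x) ^ n = ((qmk L x) ^ n₀) ^ (p + 1) := pow_mul _ n₀ (p + 1)
      _ = ((qmk L x) ^ (2 * n₀)) ^ (p + 1) := by rw [hidem₀ (qmk L x)]
      _ = (qmk L x) ^ ((2 * n₀) * (p + 1)) := (pow_mul _ (2 * n₀) (p + 1)).symm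
      _ = (qmk L x) ^ (2 * n) := by congr 1; rw [hn0]; ring
  · -- ZG equation
    intro x y s t
    simp only [List.append_assoc]
    constructor
    · intro h
      have := zg_core L (n := n) hsc (by omega) x
        (s ++ ((wpow x (n + 1) ++ (y ++ t))))
        (s ++ (y ++ (wpow x (n + 1) ++ t)))
        (clean L s) (clean L y ++ clean L t)
        (clean L s ++ clean L y) (clean L t)
        (by simp [clean_append, clean_wpow, List.append_assoc])
        (by simp [clean_append, clean_wpow, List.append_assoc])
        (by simp [List.append_assoc])
        (by simpa [List.append_assoc] using h)
      simpa [List.append_assoc] using this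
    · intro h
      have := zg_core L (n := n) hsc (by omega) x
        (s ++ (y ++ (wpow x (n + 1) ++ t)))
        (s ++ ((wpow x (n + 1) ++ (y ++ t))))
        (clean L s ++ clean L y) (clean L t)
        (clean L s) (clean L y ++ clean L t)
        (by simp [clean_append, clean_wpow, List.append_assoc])
        (by simp [clean_append, clean_wpow, List.append_assoc])
        (by simp [List.append_assoc])
        (by simpa [List.append_assoc] using h)
      simpa [List.append_assoc] using this
  · -- semi-extensibility
    intro x y z a hna hy
    have haT : a ∈ freqLetters L p (x ++ y ++ z ++ wpow [a] n) := by
      refine ⟨hna, ?_⟩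
      have h1 : countOcc a (x ++ y ++ z ++ wpow [a] n) =
          countOcc a x + countOcc a y + countOcc a z + n * countOcc a [a] := by
        rw [countOcc_append, countOcc_append, countOcc_append, countOcc_wpow]
      rw [countOcc_single_self] at h1
      omega
    have hTne : freqLetters L p (x ++ y ++ z ++ wpow [a] n) ≠ ∅ :=
      Set.nonempty_iff_ne_empty.1 ⟨a, haT⟩
    apply hsc (x ++ y ++ z ++ wpow [a] n) y hy hTne
    refine ⟨removeLetters (freqLetters L p (x ++ y ++ z ++ wpow [a] n)) x,
      removeLetters (freqLetters L p (x ++ y ++ z ++ wpow [a] n)) z ++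
        removeLetters (freqLetters L p (x ++ y ++ z ++ wpow [a] n)) (wpow [a] n), ?_⟩
    simp [removeLetters_append, List.append_assoc]

/-- equivalence of the three definitions of semi-extensible ZG languages. -/
theorem semiExtensibleZG_tfae {α : Type*} [Finite α] (L : Set (List α))
    (hreg : Finite (Quotient (syntSetoid L))) :
    List.TFAE [
      ∃ n : ℕ, 0 < n ∧ (∀ x : List α, SyntEq L (wpow x n) (wpow x (2 * n))) ∧
        AlgebraicSE L n,
      ∃ p : ℕ, OperationalSE L p,
      ∃ p : ℕ, SelfContainedSE L p ] := by
  tfae_have 1 → 3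
  · rintro ⟨n, hn, hidem, halg⟩
    exact ⟨Nat.card (QW L) + 1, dir13 L hreg n hn hidem halg⟩
  tfae_have 3 → 2
  · rintro ⟨p, h⟩
    exact ⟨p, dir32 L p h⟩
  tfae_have 2 → 3
  · rintro ⟨p, h⟩
    exact ⟨p, dir23 L p h⟩
  tfae_have 3 → 1
  · rintro ⟨p, h⟩
    exact dir31 L hreg p h
  tfae_finish
end

section
/- Let Σ = {a, b, e} be a three-letter alphabet and let L_ab be the language of all words u over Σ such that u_{-{e}} = [a, b], or u contains at least 3 occurrences of the letter a, or u contains at least 3 occurrences of the letter b. Then: (i) e is neutral for L_ab; (ii) L_ab is not extensible (for instance [a, b] ∈ L_ab but [a, b, b] ∉ L_ab); and (iii) L_ab satisfies the self-contained semi-extensible ZG condition with threshold p = 3. -/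
variable {α : Type*}

/-- The three-letter alphabet `{a, b, e}`. -/
inductive ABE : Type
  | a : ABE
  | b : ABE
  | e : ABE

/-- The language `L_ab`: words equal to `ab` up to the letter `e`, or with at
least 3 `a`'s, or with at least 3 `b`'s. -/
def Lab : Set (List ABE) :=
  {u | removeLetters {ABE.e} u = [ABE.a, ABE.b] ∨
       3 ≤ countOcc ABE.a u ∨ 3 ≤ countOcc ABE.b u}

/-- `e` is neutral for `L_ab`, `L_ab` is not extensible
(witnessed by `[a,b] ∈ L_ab` and `[a,b,b] ∉ L_ab`), and `L_ab` satisfies the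
self-contained semi-extensible ZG condition with threshold 3. -/
theorem Lab_semiExtensibleZG :
    Neutral Lab ABE.e ∧
    ([ABE.a, ABE.b] ∈ Lab ∧ [ABE.a, ABE.b, ABE.b] ∉ Lab ∧ ¬ Extensible Lab) ∧
    SelfContainedSE Lab 3 := by
  have he : Neutral Lab ABE.e := by
    intro s t
    have h1 : removeLetters {ABE.e} (s ++ [ABE.e] ++ t) = removeLetters {ABE.e} (s ++ t) := by
      simp [removeLetters, List.filter_append]
    have h2 : countOcc ABE.a (s ++ [ABE.e] ++ t) = countOcc ABE.a (s ++ t) := by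
      simp [countOcc, List.countP_append]
    have h3 : countOcc ABE.b (s ++ [ABE.e] ++ t) = countOcc ABE.b (s ++ t) := by
      simp [countOcc, List.countP_append]
    simp only [Lab, Set.mem_setOf_eq, h1, h2, h3]
  have hab : [ABE.a, ABE.b] ∈ Lab := by
    left
    simp [removeLetters]
  have habb : [ABE.a, ABE.b, ABE.b] ∉ Lab := by
    intro h
    rcases h with h | h | h
    · simp [removeLetters] at h
    · simp [countOcc] at h
    · simp [countOcc] at h
  refine ⟨he, ⟨hab, habb, ?_⟩, ?_⟩
  · intro hext
    exact habb (hext _ _ hab ⟨[], [ABE.b], rfl⟩)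
  · intro u v hv hT hf
    rcases Set.nonempty_iff_ne_empty.2 hT with ⟨x, hx⟩
    rcases hx with ⟨hnx, hcx⟩
    cases x with
    | a => exact Or.inr (Or.inl hcx)
    | b => exact Or.inr (Or.inr hcx)
    | e => exact absurd he hnx
end

section
/- Let Σ = {a, e} be a two-letter alphabet and let L be the language of all words u over Σ such that u contains either no occurrence of the letter a or at least 2 occurrences of the letter a. Then: (i) e is neutral for L; (ii) L is not extensible (for instance the empty word is in L but the word [a] is not); and (iii) L satisfies the self-contained semi-extensible ZG condition with threshold p = 2. -/
variable {α : Type*}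

/-- The two-letter alphabet `{a, e}`. -/
inductive AE : Type
  | a : AE
  | e : AE

/-- The language of words with no `a` or at least two `a`'s. -/
def Lae : Set (List AE) :=
  {u | countOcc AE.a u = 0 ∨ 2 ≤ countOcc AE.a u}

/-- `e` is neutral for `L`, `L` is not extensible (witnessed by
`[] ∈ L` and `[a] ∉ L`), and `L` satisfies the self-contained semi-extensible
ZG condition with threshold 2. -/
theorem Lae_semiExtensibleZG :
    Neutral Lae AE.e ∧
    (([] : List AE) ∈ Lae ∧ [AE.a] ∉ Lae ∧ ¬ Extensible Lae) ∧
    SelfContainedSE Lae 2 := by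
  have hcount : ∀ s t : List AE, countOcc AE.a (s ++ [AE.e] ++ t) = countOcc AE.a (s ++ t) := by
    intro s t
    simp only [countOcc, List.countP_append, List.countP_cons, List.countP_nil]
    have : @decide (AE.e = AE.a) (Classical.propDecidable _) = false :=
      @decide_eq_false _ (Classical.propDecidable _) (by intro h; cases h)
    simp [this]
  have hneut : Neutral Lae AE.e := by
    intro s t
    simp only [Lae, Set.mem_setOf_eq, hcount]
  have hnil : ([] : List AE) ∈ Lae := Or.inl (by simp [countOcc])
  have ha : [AE.a] ∉ Lae := by
    have h1 : countOcc AE.a [AE.a] = 1 := by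
      have : @decide (AE.a = AE.a) (Classical.propDecidable _) = true :=
        @decide_eq_true _ (Classical.propDecidable _) rfl
      simp [countOcc, List.countP_cons, this]
    intro h
    rcases h with h | h <;> omega
  refine ⟨hneut, ⟨hnil, ha, ?_⟩, ?_⟩
  · intro hext
    exact ha (hext [] [AE.a] hnil ⟨[], [AE.a], by simp⟩)
  · intro u v hv hT hfac
    rcases Set.nonempty_iff_ne_empty.mpr hT with ⟨x, hx⟩
    obtain ⟨hxn, hxc⟩ := hx
    cases x with
    | a => exact Or.inr hxc
    | e => exact absurd hneut hxn
end
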